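/- arXiv:2412.21126 — 9 statements merged into one kernel-verified Lean document; each statement's English description precedes it below -/
import Mathlib

section
/- For every n ≥ 0, the sum over all Fibonacci words w of weight n of dim(w)^2 equals n!. -/
/-!
Sort the Fibonacci words of weight `n + 2` by their first letter. Since `dim (1v) = dim v` and
`dim (2v) = (n + 1) dim v` for `|v| = n`, the sums `S n = ∑_{|w| = n} dim(w)²` satisfy
`S (n + 2) = S (n + 1) + (n + 1)² S n`, which is also the recurrence
`(n + 2)! = (n + 1)! + (n + 1)² n!` of the factorials.
-/

/-- `fdim` is the number of saturated chains from `∅` to a Fibonacci word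
in the Young–Fibonacci lattice: `dim ∅ = 1`, `dim (1v) = dim v`,
`dim (2v) = (|v|+1) ⬝ dim v`. -/
def fdim : List ℕ → ℕ
  | [] => 1
  | a :: v => if a = 2 then (v.sum + 1) * fdim v else fdim v

open Finset Nat

def fibWords : ℕ → Finset (List ℕ)
  | 0 => {[]}
  | 1 => {[1]}
  | n + 2 => (fibWords (n + 1)).image (1 :: ·) ∪ (fibWords n).image (2 :: ·)

theorem mem_fibWords {n : ℕ} {w : List ℕ} :
    w ∈ fibWords n ↔ (∀ a ∈ w, a = 1 ∨ a = 2) ∧ w.sum = n := by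
  induction n using fibWords.induct generalizing w with
  | case1 =>
    rcases w with _ | ⟨a, v⟩
    · simp [fibWords]
    · simp only [fibWords, mem_singleton, reduceCtorEq, false_iff, not_and,
        List.forall_mem_cons, List.sum_cons]
      omega
  | case2 =>
    rcases w with _ | ⟨a, _ | ⟨b, v⟩⟩
    · simp [fibWords]
    · simp +contextual [fibWords]
    · simp only [fibWords, mem_singleton, List.cons.injEq, reduceCtorEq, and_false, false_iff,
        not_and, List.forall_mem_cons, List.sum_cons]
      omega
  | case3 n ih₁ ih₀ =>
    rcases w with _ | ⟨a, v⟩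
    · simp [fibWords]
    · simp only [fibWords, mem_union, mem_image, List.cons.injEq, exists_eq_right_right, ih₁, ih₀,
        List.forall_mem_cons, List.sum_cons]
      grind

theorem fdim_one_cons (v : List ℕ) : fdim (1 :: v) = fdim v := by
  simp [fdim]

theorem fdim_two_cons (v : List ℕ) : fdim (2 :: v) = (v.sum + 1) * fdim v := by
  simp [fdim]

theorem sum_fdim_sq_fibWords (n : ℕ) : ∑ w ∈ fibWords n, fdim w ^ 2 = n ! := by
  induction n using fibWords.induct with
  | case1 => simp [fibWords, fdim]
  | case2 => simp [fibWords, fdim]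
  | case3 n ih₁ ih₀ =>
    have hdisj : Disjoint ((fibWords (n + 1)).image (1 :: ·)) ((fibWords n).image (2 :: ·)) := by
      simp [disjoint_left]
    have hones : ∑ w ∈ (fibWords (n + 1)).image (1 :: ·), fdim w ^ 2 = (n + 1)! := by
      rw [sum_image (List.cons_injective.injOn), ← ih₁]
      simp only [fdim_one_cons]
    have htwos : ∑ w ∈ (fibWords n).image (2 :: ·), fdim w ^ 2 = (n + 1) ^ 2 * n ! := by
      rw [sum_image (List.cons_injective.injOn), ← ih₀, mul_sum]
      refine sum_congr rfl fun v hv => ?_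
      rw [fdim_two_cons, (mem_fibWords.1 hv).2]
      ring
    rw [fibWords, sum_union hdisj, hones, htwos, factorial_succ (n + 1), factorial_succ n]
    ring

/-- The sum of `dim(w)^2` over all Fibonacci words `w` of weight `n` equals `n!`. -/
theorem sum_fdim_sq (n : ℕ) :
    ∑ᶠ w ∈ {w : List ℕ | (∀ a ∈ w, a = 1 ∨ a = 2) ∧ w.sum = n}, (fdim w) ^ 2
      = Nat.factorial n := by
  have hset : {w : List ℕ | (∀ a ∈ w, a = 1 ∨ a = 2) ∧ w.sum = n} = ↑(fibWords n) :=
    Set.ext fun _ => mem_fibWords.symm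
  rw [hset, finsum_mem_coe_finset, sum_fdim_sq_fibWords]
end

section
/- Let t_0 = 0 and (t_k)_{k≥1} arbitrary reals, set x_k = 1 + t_{k-1}, y_k = t_k. Define the shifted tridiagonal determinants B_{ℓ-1}(m) by B_0(m) = y_{m+1}, B_1(m) = x_{m+3}·y_{m+1} − x_{m+1}·y_{m+2}, and B_ℓ(m) = x_{m+ℓ+2}·B_{ℓ-1}(m) − y_{m+ℓ+1}·B_{ℓ-2}(m) for ℓ ≥ 2. Then for all ℓ ≥ 2 and m ≥ 0, B_{ℓ-1}(m) = t_{m+1} − (1 + t_m − t_{m+1})·t_{m+2}·A_{ℓ-2}(m+3), where A_k(m) = 1 + Σ_{r=1}^{k} t_m·t_{m+1}···t_{m+r-1} (with A_0(m) = 1). -/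
/-!
With `s ℓ = t (m+ℓ+3)` the recurrence reads `B (ℓ+2) = (1 + s ℓ) B (ℓ+1) - s ℓ B ℓ`: the
consecutive differences of `B · m` get multiplied by `s ℓ` at each step. Hence they are
`(B 1 m - B 0 m) ⬝ t (m+3) ⋯ t (m+ℓ+2)`, with `B 1 m - B 0 m = -(1 + t m - t (m+1)) t (m+2)`,
and telescoping gives the closed form.
-/

open Finset

section ThreeTermRecurrence

variable {R : Type*} [CommRing R] (u s : ℕ → R)

theorem sub_eq_mul_prod_of_three_term_rec
    (h : ∀ n, u (n + 2) = (1 + s n) * u (n + 1) - s n * u n) (n : ℕ) :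
    u (n + 1) - u n = (u 1 - u 0) * ∏ j ∈ range n, s j := by
  induction n with
  | zero => simp
  | succ n ih =>
    rw [prod_range_succ, h n, ← mul_assoc, ← ih]
    ring

theorem sum_range_succ_eq_add_sum_Icc (f : ℕ → R) (n : ℕ) :
    ∑ k ∈ range (n + 1), f k = f 0 + ∑ k ∈ Icc 1 n, f k := by
  rw [range_eq_Ico, sum_eq_sum_Ico_succ_bot n.succ_pos, zero_add, Nat.succ_eq_add_one,
    Ico_add_one_right_eq_Icc]

theorem eq_add_mul_sum_prod_of_three_term_rec
    (h : ∀ n, u (n + 2) = (1 + s n) * u (n + 1) - s n * u n) (n : ℕ) :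
    u (n + 1) = u 0 + (u 1 - u 0) * (1 + ∑ r ∈ Icc 1 n, ∏ j ∈ range r, s j) := by
  have telescope := sum_range_sub u (n + 1)
  rw [sum_congr rfl fun k _ => sub_eq_mul_prod_of_three_term_rec u s h k, ← mul_sum,
    sum_range_succ_eq_add_sum_Icc, range_zero, prod_empty] at telescope
  linear_combination -telescope

end ThreeTermRecurrence

theorem B_shifted_eq_general (t x y : ℕ → ℝ)
    (hx : ∀ k, x k = 1 + t (k - 1)) (hy : ∀ k, y k = t k)
    (B : ℕ → ℕ → ℝ)
    (hB0 : ∀ m, B 0 m = y (m + 1))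
    (hB1 : ∀ m, B 1 m = x (m + 3) * y (m + 1) - x (m + 1) * y (m + 2))
    (hBrec : ∀ ℓ m, B (ℓ + 2) m = x (m + ℓ + 4) * B (ℓ + 1) m - y (m + ℓ + 3) * B ℓ m)
    (ℓ m : ℕ) (hℓ : 2 ≤ ℓ) :
    B (ℓ - 1) m = t (m + 1) - (1 + t m - t (m + 1)) * t (m + 2) *
      (1 + ∑ r ∈ Finset.Icc 1 (ℓ - 2), ∏ j ∈ Finset.range r, t (m + 3 + j)) := by
  have hrec (n : ℕ) :
      B (n + 2) m = (1 + t (m + 3 + n)) * B (n + 1) m - t (m + 3 + n) * B n m := by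
    rw [hBrec, hx, hy, show m + n + 4 - 1 = m + 3 + n by omega,
      show m + n + 3 = m + 3 + n by omega]
  have hB0m : B 0 m = t (m + 1) := by rw [hB0, hy]
  have hB1m : B 1 m = t (m + 1) - (1 + t m - t (m + 1)) * t (m + 2) := by
    rw [hB1, hx, hx, hy, hy, show m + 3 - 1 = m + 2 by omega, Nat.add_sub_cancel]
    ring
  obtain ⟨n, rfl⟩ := Nat.exists_eq_add_of_le' hℓ
  rw [show n + 2 - 1 = n + 1 by omega, Nat.add_sub_cancel,
    eq_add_mul_sum_prod_of_three_term_rec (B · m) (fun j => t (m + 3 + j)) hrec, hB0m, hB1m]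
  ring

/-- Let `t 0 = 0`, `x k = 1 + t (k-1)`, `y k = t k`, and let the shifted
B-determinants satisfy `B 0 m = y (m+1)`,
`B 1 m = x (m+3) * y (m+1) - x (m+1) * y (m+2)`, and
`B (ℓ+2) m = x (m+ℓ+4) * B (ℓ+1) m - y (m+ℓ+3) * B ℓ m`.
Then for all `ℓ ≥ 2` and `m ≥ 0`:
`B (ℓ-1) m = t (m+1) − (1 + t m − t (m+1)) ⬝ t (m+2) ⬝ A (ℓ-2) (m+3)`,
where `A k m = 1 + Σ_{r=1}^{k} t m ⋯ t (m+r-1)`. -/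
theorem B_shifted_eq (t x y : ℕ → ℝ) (ht0 : t 0 = 0)
    (hx : ∀ k, x k = 1 + t (k - 1)) (hy : ∀ k, y k = t k)
    (B : ℕ → ℕ → ℝ)
    (hB0 : ∀ m, B 0 m = y (m + 1))
    (hB1 : ∀ m, B 1 m = x (m + 3) * y (m + 1) - x (m + 1) * y (m + 2))
    (hBrec : ∀ ℓ m, B (ℓ + 2) m = x (m + ℓ + 4) * B (ℓ + 1) m - y (m + ℓ + 3) * B ℓ m)
    (ℓ m : ℕ) (hℓ : 2 ≤ ℓ) :
    B (ℓ - 1) m = t (m + 1) - (1 + t m - t (m + 1)) * t (m + 2) *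
      (1 + ∑ r ∈ Finset.Icc 1 (ℓ - 2), ∏ j ∈ Finset.range r, t (m + 3 + j)) :=
  B_shifted_eq_general t x y hx hy B hB0 hB1 hBrec ℓ m hℓ
end

section
/- Let t_0 = 0 and let (t_k)_{k≥1} be positive reals satisfying t_{m+1} ≥ 1 + t_m for all m ≥ 0 (divergent type). Set x_k = 1 + t_{k-1}, y_k = t_k, and define A_ℓ(m) and B_ℓ(m) by the tridiagonal three-term recurrences (A_0(m)=1, A_1(m)=x_{m+1}, A_ℓ(m)=x_{m+ℓ}A_{ℓ-1}(m)−y_{m+ℓ-1}A_{ℓ-2}(m); B_0(m)=y_{m+1}, B_1(m)=x_{m+3}y_{m+1}−x_{m+1}y_{m+2}, B_ℓ(m)=x_{m+ℓ+2}B_{ℓ-1}(m)−y_{m+ℓ+1}B_{ℓ-2}(m)). Then A_ℓ(m) > 0 and B_ℓ(m) > 0 for all ℓ ≥ 0 and m ≥ 0. -/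
/-!
Both families satisfy a recurrence `u (n + 2) = (1 + s n) * u (n + 1) - s n * u n` with
`s n ≥ 0`, i.e. `u (n + 2) - u (n + 1) = s n * (u (n + 1) - u n)`: the successive differences
are nonnegative as soon as `u 1 - u 0` is. For `A` that first difference is `t m ≥ 0`, and
for `B` it is `t (m + 2) * (t (m + 1) - 1 - t m) ≥ 0` by divergence, so both sequences in `ℓ`
are nondecreasing and stay above their positive initial values.
-/

section

variable {R : Type*} [Ring R] [PartialOrder R] [IsOrderedRing R]

lemma monotone_of_sub_succ_eq_mul {u s : ℕ → R} (hs : ∀ n, 0 ≤ s n) (h01 : u 0 ≤ u 1)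
    (hrec : ∀ n, u (n + 2) - u (n + 1) = s n * (u (n + 1) - u n)) : Monotone u := by
  refine monotone_nat_of_le_succ fun n => ?_
  induction n with
  | zero => exact h01
  | succ n ih =>
    exact sub_nonneg.mp <| (hrec n).symm ▸ mul_nonneg (hs n) (sub_nonneg.mpr ih)

lemma pos_of_sub_succ_eq_mul {u s : ℕ → R} (hs : ∀ n, 0 ≤ s n) (h0 : 0 < u 0)
    (h01 : u 0 ≤ u 1) (hrec : ∀ n, u (n + 2) - u (n + 1) = s n * (u (n + 1) - u n)) (n : ℕ) :
    0 < u n :=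
  h0.trans_le (monotone_of_sub_succ_eq_mul hs h01 hrec n.zero_le)

end

/-- Divergent-type positivity: for `t 0 = 0`, `t k > 0` (k ≥ 1), and
`t (m+1) ≥ 1 + t m` for all `m ≥ 0`, with `x k = 1 + t (k-1)`, `y k = t k`,
all shifted tridiagonal determinants `A ℓ m` and `B ℓ m` (defined by their
three-term recurrences) are strictly positive. -/
theorem divergent_type_positive (t x y : ℕ → ℝ) (ht0 : t 0 = 0)
    (htpos : ∀ k, 1 ≤ k → 0 < t k)
    (hdiv : ∀ m, 1 + t m ≤ t (m + 1))
    (hx : ∀ k, x k = 1 + t (k - 1)) (hy : ∀ k, y k = t k)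
    (A B : ℕ → ℕ → ℝ)
    (hA0 : ∀ m, A 0 m = 1) (hA1 : ∀ m, A 1 m = x (m + 1))
    (hArec : ∀ ℓ m, A (ℓ + 2) m = x (m + ℓ + 2) * A (ℓ + 1) m - y (m + ℓ + 1) * A ℓ m)
    (hB0 : ∀ m, B 0 m = y (m + 1))
    (hB1 : ∀ m, B 1 m = x (m + 3) * y (m + 1) - x (m + 1) * y (m + 2))
    (hBrec : ∀ ℓ m, B (ℓ + 2) m = x (m + ℓ + 4) * B (ℓ + 1) m - y (m + ℓ + 3) * B ℓ m) :
    ∀ ℓ m : ℕ, 0 < A ℓ m ∧ 0 < B ℓ m := by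
  have htnn : ∀ k, 0 ≤ t k
    | 0 => ht0.ge
    | k + 1 => (htpos (k + 1) k.succ_pos).le
  have hx' : ∀ k, x (k + 1) = 1 + t k := fun k => hx (k + 1)
  have hyt : y = t := funext hy
  subst y
  intro ℓ m
  constructor
  · refine pos_of_sub_succ_eq_mul (u := (A · m)) (s := fun l => t (m + l + 1))
      (fun _ => htnn _) (by simp [hA0]) ?_ (fun l => ?_) ℓ
    · linarith [hA0 m, hA1 m, hx' m, htnn m]
    · rw [hArec, hx' (m + l + 1)]
      ring
  · refine pos_of_sub_succ_eq_mul (u := (B · m)) (s := fun l => t (m + l + 3))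
      (fun _ => htnn _) (by simpa [hB0] using htpos (m + 1) m.succ_pos) ?_ (fun l => ?_) ℓ
    · have hB1_sub_B0 : B 1 m - B 0 m = t (m + 2) * (t (m + 1) - 1 - t m) := by
        rw [hB1, hB0, hx' (m + 2), hx' m]
        ring
      have := mul_nonneg (htnn (m + 2)) (sub_nonneg.mpr (le_sub_iff_add_le'.mpr (hdiv m)))
      linarith
    · rw [hBrec, hx' (m + l + 3)]
      ring
end

section
/- Let (t_k)_{k≥1} be a sequence of convergent type: t_k > 0, t_0 = 0, the series A_∞(m) = 1 + Σ_{r≥1} t_m···t_{m+r-1} converge, and B_∞(m) = t_{m+1} + (t_{m+1} − t_m − 1)·t_{m+2}·A_∞(m+3) ≥ 0 for all m ≥ 0. Then A_∞(1) ≥ A_∞(2) > A_∞(3) > A_∞(4) > ..., i.e., the sequence (A_∞(m))_{m≥1} is weakly decreasing at the first step and strictly decreasing for m ≥ 2. -/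
/-- `A_∞(m) = 1 + Σ_{r ≥ 1} t m ⬝ t (m+1) ⋯ t (m+r-1)`. -/
noncomputable def Ainf (t : ℕ → ℝ) (m : ℕ) : ℝ :=
  1 + ∑' r : ℕ, ∏ j ∈ Finset.range (r + 1), t (m + j)

/-- `B_∞(m) = t (m+1) + (t (m+1) − t m − 1) ⬝ t (m+2) ⬝ A_∞(m+3)`. -/
noncomputable def Binf (t : ℕ → ℝ) (m : ℕ) : ℝ :=
  t (m + 1) + (t (m + 1) - t m - 1) * t (m + 2) * Ainf t (m + 3)

/-!
Peeling off the first factor gives `A_∞(m) = 1 + t_m A_∞(m+1)`. Applying this at `m+1` and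
`m+2` yields `A_∞(m+1) − A_∞(m+2) = B_∞(m) + t_m t_{m+2} A_∞(m+3)`, whose right-hand side is
`≥ B_∞(0) ≥ 0` for `m = 0` (as `t_0 = 0`) and `> 0` for `m ≥ 1` (as `A_∞ ≥ 1`).
-/

lemma prod_range_succ_eq_mul_prod_shift {M : Type*} [CommMonoid M] (t : ℕ → M) (m n : ℕ) :
    ∏ j ∈ Finset.range (n + 1), t (m + j) = t m * ∏ j ∈ Finset.range n, t (m + 1 + j) := by
  rw [Finset.prod_range_succ']
  simp only [add_zero, add_assoc, add_comm 1, mul_comm]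

lemma Ainf_eq_one_add_mul (t : ℕ → ℝ) (m : ℕ)
    (hs : Summable fun r : ℕ => ∏ j ∈ Finset.range (r + 1), t (m + j)) :
    Ainf t m = 1 + t m * Ainf t (m + 1) := by
  unfold Ainf
  rw [hs.tsum_eq_zero_add]
  simp only [prod_range_succ_eq_mul_prod_shift, tsum_mul_left, zero_add]
  ring

lemma one_le_Ainf (t : ℕ → ℝ) (m : ℕ) (ht : ∀ j, 0 ≤ t (m + j)) : 1 ≤ Ainf t m :=
  le_add_of_nonneg_right <| tsum_nonneg fun _ => Finset.prod_nonneg fun j _ => ht j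

lemma Ainf_succ_sub_Ainf_succ_succ (t : ℕ → ℝ) (m : ℕ)
    (hs₁ : Summable fun r : ℕ => ∏ j ∈ Finset.range (r + 1), t (m + 1 + j))
    (hs₂ : Summable fun r : ℕ => ∏ j ∈ Finset.range (r + 1), t (m + 2 + j)) :
    Ainf t (m + 1) - Ainf t (m + 2) = Binf t m + t m * t (m + 2) * Ainf t (m + 3) := by
  rw [Ainf_eq_one_add_mul t (m + 1) hs₁, Ainf_eq_one_add_mul t (m + 2) hs₂, Binf]
  ring

/-- For a sequence of convergent type, the sequence `(A_∞(m))_{m ≥ 1}` is weakly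
decreasing at the first step and strictly decreasing afterwards:
`A_∞(1) ≥ A_∞(2) > A_∞(3) > ⋯`. -/
theorem Ainf_decreasing (t : ℕ → ℝ) (ht0 : t 0 = 0) (htpos : ∀ k, 1 ≤ k → 0 < t k)
    (hsum : ∀ m, 1 ≤ m → Summable (fun r : ℕ => ∏ j ∈ Finset.range (r + 1), t (m + j)))
    (hB : ∀ m : ℕ, 0 ≤ Binf t m) :
    Ainf t 2 ≤ Ainf t 1 ∧ ∀ m, 2 ≤ m → Ainf t (m + 1) < Ainf t m := by
  have hdiff (m : ℕ) := Ainf_succ_sub_Ainf_succ_succ t m (hsum _ (by omega)) (hsum _ (by omega))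
  refine ⟨?_, fun m hm => ?_⟩
  · have h := hdiff 0
    rw [ht0, zero_mul, zero_mul, add_zero] at h
    linarith [hB 0]
  · obtain ⟨k, rfl⟩ : ∃ k, m = k + 1 := ⟨m - 1, by omega⟩
    have hpos : 0 < t k * t (k + 2) * Ainf t (k + 3) :=
      mul_pos (mul_pos (htpos k (by omega)) (htpos (k + 2) (by omega)))
        (one_pos.trans_le (one_le_Ainf t (k + 3) fun j => (htpos _ (by omega)).le))
    linarith [hdiff k, hB k]
end

section
/- Let (t_k)_{k≥1} be a sequence of convergent type (t_k > 0, t_0 = 0, the series A_∞(m) = 1 + Σ_{r≥1} t_m···t_{m+r-1} converge, and B_∞(m) = t_{m+1} + (t_{m+1} − t_m − 1)·t_{m+2}·A_∞(m+3) ≥ 0 for all m ≥ 0). Then lim_{m→∞} t_m = 0. -/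
/-- For a sequence `t` of convergent type, `t m → 0` as `m → ∞`. -/
theorem convergent_type_tendsto_zero (t : ℕ → ℝ) (ht0 : t 0 = 0)
    (htpos : ∀ k, 1 ≤ k → 0 < t k)
    (hsum : ∀ m, 1 ≤ m → Summable (fun r : ℕ => ∏ j ∈ Finset.range (r + 1), t (m + j)))
    (hB : ∀ m : ℕ, 0 ≤ Binf t m) :
    Filter.Tendsto t Filter.atTop (nhds 0) := by
  have hprodpos : ∀ m, 1 ≤ m → ∀ r, 0 < ∏ j ∈ Finset.range (r + 1), t (m + j) := by
    intro m hm r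
    apply Finset.prod_pos
    intro j _
    exact htpos _ (le_trans hm (Nat.le_add_right m j))
  -- A(m) ≥ 1 + t m ≥ 1 for m ≥ 1
  have hAt : ∀ m, 1 ≤ m → 1 + t m ≤ Ainf t m := by
    intro m hm
    have h0 : (∏ j ∈ Finset.range (0 + 1), t (m + j)) ≤
        ∑' r : ℕ, ∏ j ∈ Finset.range (r + 1), t (m + j) :=
      (hsum m hm).le_tsum 0 (fun j _ => (hprodpos m hm j).le)
    have h0' : t m ≤ ∑' r : ℕ, ∏ j ∈ Finset.range (r + 1), t (m + j) := by
      simpa using h0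
    unfold Ainf
    linarith
  have hA1 : ∀ m, 1 ≤ m → 1 ≤ Ainf t m := by
    intro m hm
    have := hAt m hm
    have := htpos m hm
    linarith
  -- rearranged B inequality
  have hBkey : ∀ m, (1 + t m - t (m + 1)) * (t (m + 2) * Ainf t (m + 3)) ≤ t (m + 1) := by
    intro m
    have h := hB m
    unfold Binf at h
    nlinarith [h]
  -- decrease propagates
  have hstep : ∀ k, t (k + 1) ≤ t k → t (k + 2) * Ainf t (k + 3) ≤ t (k + 1) := by
    intro k hk
    have h := hBkey k
    have hA : 1 ≤ Ainf t (k + 3) := hA1 (k + 3) (by omega)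
    have ht2 : 0 < t (k + 2) := htpos _ (by omega)
    nlinarith [mul_pos ht2 (lt_of_lt_of_le one_pos hA)]
  by_cases hinc : ∀ m, 1 ≤ m → t m < t (m + 1)
  · -- strictly increasing case: contradiction
    exfalso
    have hmono : ∀ a, 1 ≤ a → ∀ b, a ≤ b → t a ≤ t b := by
      intro a ha b hb
      induction b, hb using Nat.le_induction with
      | base => exact le_rfl
      | succ n hn ih => exact le_trans ih (hinc n (le_trans ha hn)).le
    -- t m < 1 for m ≥ 1
    have hlt1 : ∀ m, 1 ≤ m → t m < 1 := by
      intro m hm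
      by_contra hge
      push_neg at hge
      have h2 : ∀ r, (1 : ℝ) ≤ ∏ j ∈ Finset.range (r + 1), t (m + j) := by
        intro r
        have := Finset.prod_le_prod (s := Finset.range (r + 1)) (f := fun _ => (1 : ℝ))
          (g := fun j => t (m + j)) (fun i _ => zero_le_one)
          (fun j _ => le_trans hge (hmono m hm (m + j) (Nat.le_add_right m j)))
        simpa using this
      have h3 := ge_of_tendsto' (hsum m hm).tendsto_atTop_zero h2
      linarith
    -- geometric lower bound: A(m) * (1 - t m) ≥ 1
    have hAgeom : ∀ m, 1 ≤ m → 1 ≤ Ainf t m * (1 - t m) := by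
      intro m hm
      have htm0 : 0 < t m := htpos m hm
      have htm1 : t m < 1 := hlt1 m hm
      have hsg : Summable (fun r : ℕ => t m ^ (r + 1)) := by
        simpa [pow_succ'] using (summable_geometric_of_lt_one htm0.le htm1).mul_left (t m)
      have hle : ∀ r : ℕ, t m ^ (r + 1) ≤ ∏ j ∈ Finset.range (r + 1), t (m + j) := by
        intro r
        have : ∏ _ ∈ Finset.range (r + 1), t m ≤ ∏ j ∈ Finset.range (r + 1), t (m + j) := by
          apply Finset.prod_le_prod
          · intro i _; exact htm0.le
          · intro i _; exact hmono m hm (m + i) (Nat.le_add_right m i)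
        simpa using this
      have hts : t m * (1 - t m)⁻¹ ≤ ∑' r : ℕ, ∏ j ∈ Finset.range (r + 1), t (m + j) := by
        have := Summable.tsum_le_tsum hle hsg (hsum m hm)
        calc t m * (1 - t m)⁻¹ = ∑' r : ℕ, t m ^ (r + 1) := by
              rw [show (fun r : ℕ => t m ^ (r + 1)) = fun r : ℕ => t m * t m ^ r by
                    funext r; rw [pow_succ']]
              rw [tsum_mul_left, tsum_geometric_of_lt_one htm0.le htm1]
          _ ≤ _ := this
      have hA : t m * (1 - t m)⁻¹ + 1 ≤ Ainf t m := by unfold Ainf; linarith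
      have h1m : 0 < 1 - t m := by linarith
      have : (t m * (1 - t m)⁻¹ + 1) * (1 - t m) ≤ Ainf t m * (1 - t m) :=
        mul_le_mul_of_nonneg_right hA h1m.le
      calc (1 : ℝ) = (t m * (1 - t m)⁻¹ + 1) * (1 - t m) := by field_simp; ring
        _ ≤ Ainf t m * (1 - t m) := this
    -- contradiction at m = 1
    have h1 := hBkey 1
    have ht1 := htpos 1 le_rfl
    have ht2 := htpos 2 (by norm_num)
    have ht3 := htpos 3 (by norm_num)
    have h12 := hinc 1 le_rfl
    have h23 := hinc 2 (by norm_num)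
    have h34 := hinc 3 (by norm_num)
    have ht4lt := hlt1 4 (by norm_num)
    have hA4 := hAgeom 4 (by norm_num)
    have hA4pos : (0:ℝ) < Ainf t 4 := lt_of_lt_of_le one_pos (hA1 4 (by norm_num))
    norm_num at h1
    -- from h1 : (1 + t 1 - t 2) * (t 3 * Ainf t 4) ≤ t 2
    have hc : 0 < 1 + t 1 - t 2 := by linarith [hlt1 2 (by norm_num)]
    have h1m4 : 0 < 1 - t 4 := by linarith
    -- multiply h1 by (1 - t 4):
    have e1 : (1 + t 1 - t 2) * t 3 * (Ainf t 4 * (1 - t 4)) ≤ t 2 * (1 - t 4) := by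
      nlinarith [mul_le_mul_of_nonneg_right h1 h1m4.le]
    have e2 : (1 + t 1 - t 2) * t 3 ≤ t 2 * (1 - t 4) := by
      nlinarith [mul_pos hc ht3]
    nlinarith [mul_pos hc ht2]
  · -- eventually decreasing case
    push_neg at hinc
    obtain ⟨M, hM1, hMd⟩ := hinc
    -- antitone from M on
    have hanti : ∀ n, t (M + n + 1) ≤ t (M + n) := by
      intro n
      induction n with
      | zero => simpa using hMd
      | succ n ih =>
        have h := hstep (M + n) ih
        have hA : 1 ≤ Ainf t (M + n + 3) := hA1 _ (by omega)
        have ht2 : 0 < t (M + n + 2) := htpos _ (by omega)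
        have : t (M + n + 2) ≤ t (M + n + 2) * Ainf t (M + n + 3) := by
          nlinarith
        exact le_trans this h
    set g : ℕ → ℝ := fun n => t (M + n) with hg
    have hganti : Antitone g := antitone_nat_of_succ_le (fun n => hanti n)
    have hgpos : ∀ n, 0 < g n := fun n => htpos _ (by omega)
    have hbdd : BddBelow (Set.range g) := ⟨0, by rintro x ⟨n, rfl⟩; exact (hgpos n).le⟩
    have hgtend : Filter.Tendsto g Filter.atTop (nhds (⨅ n, g n)) :=
      tendsto_atTop_ciInf hganti hbdd
    set γ : ℝ := ⨅ n, g n with hγ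
    have hγ0 : 0 ≤ γ := le_ciInf (fun n => (hgpos n).le)
    have hγle : ∀ n, γ ≤ g n := fun n => ciInf_le hbdd n
    -- key inequality g(n+2)*(1+γ) ≤ g(n+1)
    have hkey : ∀ n, g (n + 2) * (1 + γ) ≤ g (n + 1) := by
      intro n
      have h := hstep (M + n) (hanti n)
      have hA : 1 + t (M + n + 3) ≤ Ainf t (M + n + 3) := hAt _ (by omega)
      have hγ3 : γ ≤ t (M + n + 3) := hγle (n + 3)
      have ht2 : 0 < t (M + n + 2) := htpos _ (by omega)
      show t (M + n + 2) * (1 + γ) ≤ t (M + n + 1)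
      nlinarith
    -- take limits
    have hlim1 : Filter.Tendsto (fun n => g (n + 2) * (1 + γ)) Filter.atTop
        (nhds (γ * (1 + γ))) := by
      exact ((Filter.tendsto_add_atTop_iff_nat 2).mpr hgtend).mul_const (1 + γ)
    have hlim2 : Filter.Tendsto (fun n => g (n + 1)) Filter.atTop (nhds γ) :=
      (Filter.tendsto_add_atTop_iff_nat 1).mpr hgtend
    have hγγ : γ * (1 + γ) ≤ γ := le_of_tendsto_of_tendsto' hlim1 hlim2 hkey
    have hγzero : γ = 0 := by nlinarith
    rw [hγzero] at hgtend
    have : Filter.Tendsto (fun n => t (n + M)) Filter.atTop (nhds 0) := by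
      have : (fun n => t (n + M)) = g ∘ (fun n => n) ∘ (fun n => n) := by
        funext n; simp [hg, Nat.add_comm]
      simpa [Nat.add_comm] using hgtend
    exact (Filter.tendsto_add_atTop_iff_nat M).mp this
end

section
/- For any set partition π of {1,...,n}, the nesting number nest(π) equals Σ_{k≥1} (k−1)·g_k(π). -/
/-- In a set partition (equivalence relation) `s` of `Fin n`, `i` precedes `j` if
they lie in the same block and `j` is the next-larger element after `i` in that block. -/
def precedes {n : ℕ} (s : Setoid (Fin n)) (i j : Fin n) : Prop :=
  i < j ∧ s.r i j ∧ ∀ k, i < k → k < j → ¬ s.r i k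

/-- `Γ_i(π)`: the set of elements `a < i` that precede some element `b ≥ i`. -/
def Gam {n : ℕ} (s : Setoid (Fin n)) (i : Fin n) : Set (Fin n) :=
  {a | a < i ∧ ∃ b, precedes s a b ∧ i ≤ b}

/-- `g_k(π)`: the number of closers/transients `i` (elements preceded by some `a`)
such that the position of that `a` in the increasing list of `Γ_i(π)` equals `k`. -/
noncomputable def gstat {n : ℕ} (s : Setoid (Fin n)) (k : ℕ) : ℕ :=
  Set.ncard {i : Fin n | ∃ a, precedes s a i ∧
    Set.ncard {a' | a' ∈ Gam s i ∧ a' ≤ a} = k}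

/-- `nest(π)`: the number of pairs of precedence relations `(a,b)`, `(c,d)` with
`a < c < d < b`. -/
noncomputable def nestStat {n : ℕ} (s : Setoid (Fin n)) : ℕ :=
  Set.ncard {q : (Fin n × Fin n) × (Fin n × Fin n) |
    precedes s q.1.1 q.1.2 ∧ precedes s q.2.1 q.2.2 ∧
    q.1.1 < q.2.1 ∧ q.2.2 < q.1.2}

open Classical Finset

section Aux

variable {n : ℕ} {s : Setoid (Fin n)}

lemma precedes_right_unique {a b b' : Fin n} (h : precedes s a b) (h' : precedes s a b') :
    b = b' := by
  by_contra hne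
  rcases lt_or_gt_of_ne hne with hlt | hlt
  · exact h'.2.2 b h.1 hlt h.2.1
  · exact h.2.2 b' h'.1 hlt h'.2.1

lemma precedes_left_unique {a a' b : Fin n} (h : precedes s a b) (h' : precedes s a' b) :
    a = a' := by
  by_contra hne
  have hr : s.r a a' := s.trans h.2.1 (s.symm h'.2.1)
  rcases lt_or_gt_of_ne hne with hlt | hlt
  · exact h.2.2 a' hlt h'.1 hr
  · exact h'.2.2 a hlt h.1 (s.symm hr)

/-- The position `γ_i` of the predecessor of `i` inside `Γ_i`. -/
noncomputable def gamPos (s : Setoid (Fin n)) (i : Fin n) : ℕ :=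
  if h : ∃ a, precedes s a i then
    Set.ncard {a' | a' ∈ Gam s i ∧ a' ≤ h.choose} else 0

lemma gamPos_eq {i a : Fin n} (ha : precedes s a i) :
    gamPos s i = Set.ncard {a' | a' ∈ Gam s i ∧ a' ≤ a} := by
  have h : ∃ a, precedes s a i := ⟨a, ha⟩
  rw [gamPos, dif_pos h, precedes_left_unique h.choose_spec ha]

lemma gamPos_le (s : Setoid (Fin n)) (i : Fin n) : gamPos s i ≤ n := by
  rw [gamPos]
  split
  · calc Set.ncard {a' | a' ∈ Gam s i ∧ a' ≤ _}
        ≤ (Set.univ : Set (Fin n)).ncard :=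
          Set.ncard_le_ncard (Set.subset_univ _) Set.finite_univ
      _ = n := by simp [Set.ncard_univ]
  · exact Nat.zero_le n

end Aux

/-- For any set partition `π` of `{1, …, n}`, `nest(π) = Σ_{k ≥ 1} (k−1) ⬝ g_k(π)`. -/
theorem nest_eq_sum {n : ℕ} (s : Setoid (Fin n)) :
    nestStat s = ∑ᶠ k : ℕ, (k - 1) * gstat s k := by
  classical
  set C : Finset (Fin n) := univ.filter (fun i => ∃ a, precedes s a i) with hC
  -- g_k as a finset cardinality
  have gstat_eq : ∀ k, gstat s k = (C.filter fun i => gamPos s i = k).card := by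
    intro k
    have hset : {i : Fin n | ∃ a, precedes s a i ∧
        Set.ncard {a' | a' ∈ Gam s i ∧ a' ≤ a} = k}
        = ↑(C.filter fun i => gamPos s i = k) := by
      ext i
      simp only [Set.mem_setOf_eq, coe_filter, hC, mem_filter, mem_univ, true_and,
        Set.mem_setOf_eq]
      constructor
      · rintro ⟨a, ha, hk⟩
        exact ⟨⟨a, ha⟩, by rw [gamPos_eq ha]; exact hk⟩
      · rintro ⟨⟨a, ha⟩, hk⟩
        exact ⟨a, ha, by rw [← gamPos_eq ha]; exact hk⟩
    rw [gstat, hset, Set.ncard_coe_finset]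
  -- RHS as a finite sum over closers
  have hRHS : ∑ᶠ k : ℕ, (k - 1) * gstat s k = ∑ i ∈ C, (gamPos s i - 1) := by
    have hsub : (Function.support fun k => (k - 1) * gstat s k) ⊆ ↑(Finset.range (n + 1)) := by
      intro k hk
      simp only [Function.mem_support] at hk
      simp only [coe_range, Set.mem_Iio]
      by_contra hlt
      push_neg at hlt
      have : (C.filter fun i => gamPos s i = k) = ∅ := by
        apply Finset.filter_false_of_mem
        intro i _ hgi
        have := gamPos_le s i
        omega
      rw [gstat_eq, this] at hk
      simp at hk
    rw [finsum_eq_finset_sum_of_support_subset _ hsub]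
    rw [← Finset.sum_fiberwise_of_maps_to (g := fun i => gamPos s i) (t := range (n + 1))
      (fun i _ => by simp [Nat.lt_succ_iff, gamPos_le s i])]
    refine Finset.sum_congr rfl fun k _ => ?_
    rw [gstat_eq]
    rw [Finset.sum_congr rfl (fun i hi => by
      rw [(Finset.mem_filter.1 hi).2])]
    rw [Finset.sum_const, smul_eq_mul, mul_comm]
  rw [hRHS]
  -- LHS as a finset cardinality
  set N : Finset ((Fin n × Fin n) × (Fin n × Fin n)) :=
    univ.filter (fun q => precedes s q.1.1 q.1.2 ∧ precedes s q.2.1 q.2.2 ∧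
      q.1.1 < q.2.1 ∧ q.2.2 < q.1.2) with hN
  have hLHS : nestStat s = N.card := by
    rw [nestStat, ← Set.ncard_coe_finset]
    congr 1
    ext q
    simp [hN]
  rw [hLHS]
  rw [Finset.card_eq_sum_card_fiberwise (f := fun q => q.2.2) (t := C)
    (fun q hq => by
      exact mem_filter.2 ⟨mem_univ _, q.2.1, (mem_filter.1 hq).2.2.1⟩)]
  refine Finset.sum_congr rfl fun i hi => ?_
  simp only [hC, mem_filter, mem_univ, true_and] at hi
  obtain ⟨c, hc⟩ := hi
  -- the fiber over i is in bijection with {a ∈ Γ_i | a < c}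
  have hA : (N.filter fun q => q.2.2 = i).card
      = (univ.filter fun a : Fin n => a ∈ Gam s i ∧ a < c).card := by
    apply Finset.card_bij (fun q _ => q.1.1)
    · rintro ⟨⟨a, b⟩, ⟨c', d⟩⟩ hq
      simp only [hN, mem_filter, mem_univ, true_and] at hq
      obtain ⟨⟨hab, hcd, hac, hdb⟩, hdi⟩ := hq
      subst hdi
      have hcc : c' = c := precedes_left_unique hcd hc
      subst hcc
      simp only [mem_filter, mem_univ, true_and]
      refine ⟨⟨lt_trans hac hc.1, b, hab, le_of_lt hdb⟩, hac⟩
    · rintro ⟨⟨a, b⟩, ⟨c', d⟩⟩ hq ⟨⟨a2, b2⟩, ⟨c2, d2⟩⟩ hq2 heq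
      simp only [hN, mem_filter, mem_univ, true_and] at hq hq2
      obtain ⟨⟨hab, hcd, hac, hdb⟩, hdi⟩ := hq
      obtain ⟨⟨hab2, hcd2, hac2, hdb2⟩, hdi2⟩ := hq2
      simp only at heq
      subst heq; subst hdi; subst hdi2
      have : b = b2 := precedes_right_unique hab hab2
      subst this
      have : c' = c2 := precedes_left_unique hcd hcd2
      subst this
      rfl
    · intro a ha
      simp only [mem_filter, mem_univ, true_and] at ha
      obtain ⟨⟨hai, b, hab, hib⟩, hacc⟩ := ha
      have hbne : i ≠ b := by
        intro h
        subst h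
        exact absurd (precedes_left_unique hab hc) (ne_of_lt hacc)
      refine ⟨((a, b), (c, i)), ?_, rfl⟩
      simp only [hN, mem_filter, mem_univ, true_and]
      exact ⟨⟨hab, hc, hacc, lt_of_le_of_ne hib hbne⟩, trivial⟩
  rw [hA]
  -- and that set has cardinality γ_i - 1
  have hS : gamPos s i = Set.ncard {a' | a' ∈ Gam s i ∧ a' ≤ c} := gamPos_eq hc
  have hcmem : c ∈ {a' | a' ∈ Gam s i ∧ a' ≤ c} := ⟨⟨hc.1, i, hc, le_refl i⟩, le_refl c⟩
  have hdiff : ({a' | a' ∈ Gam s i ∧ a' ≤ c} \ {c} : Set (Fin n))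
      = ↑(univ.filter fun a : Fin n => a ∈ Gam s i ∧ a < c) := by
    ext a
    simp only [Set.mem_diff, Set.mem_setOf_eq, Set.mem_singleton_iff, coe_filter,
      mem_univ, true_and, Set.mem_setOf_eq]
    constructor
    · rintro ⟨⟨hg, hle⟩, hne⟩
      exact ⟨hg, lt_of_le_of_ne hle hne⟩
    · rintro ⟨hg, hlt⟩
      exact ⟨⟨hg, le_of_lt hlt⟩, ne_of_lt hlt⟩
  have := Set.ncard_diff_singleton_of_mem hcmem
  rw [hdiff, Set.ncard_coe_finset] at this
  rw [this, ← hS]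
end

section
/- For any set partition π of {1,...,n}, letting p = max{ k : ℓ_k(π) > 0 }, the sequence (ℓ_0(π), ℓ_1(π), ..., ℓ_p(π)) is a composition of n (all entries positive, summing to n) with the additional property that ℓ_k(π) ≥ 2 for all 1 ≤ k < p (i.e., it is a Fibonacci composition). -/
/-- Each element has at most one predecessor. -/
lemma precedes_unique {n : ℕ} (s : Setoid (Fin n)) {a a' b : Fin n}
    (h : precedes s a b) (h' : precedes s a' b) : a = a' := by
  by_contra hne
  rcases lt_or_gt_of_ne hne with hlt | hlt
  · exact h.2.2 a' hlt h'.1 (s.trans' h.2.1 (s.symm' h'.2.1))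
  · exact h'.2.2 a hlt h.1 (s.trans' h'.2.1 (s.symm' h.2.1))

lemma pred_subsingleton {n : ℕ} (s : Setoid (Fin n)) (c : Fin n) :
    {a : Fin n | precedes s a c}.ncard ≤ 1 := by
  rw [Set.ncard_le_one (Set.toFinite _)]
  intro a ha b hb
  exact precedes_unique s ha hb

/-- The total height function. -/
noncomputable def Ht {n : ℕ} (s : Setoid (Fin n)) (i : ℕ) : ℕ :=
  if hi : i < n then (Gam s ⟨i, hi⟩).ncard else 0

lemma Ht_zero {n : ℕ} (s : Setoid (Fin n)) : Ht s 0 = 0 := by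
  unfold Ht
  split
  · convert Set.ncard_empty (Fin n)
    ext a
    simp only [Gam, Set.mem_setOf_eq, Set.mem_empty_iff_false, iff_false]
    rintro ⟨ha, -⟩
    exact absurd ha (by simp [Fin.lt_def])
  · rfl

lemma Ht_step_up {n : ℕ} (s : Setoid (Fin n)) (i : ℕ) : Ht s (i + 1) ≤ Ht s i + 1 := by
  unfold Ht
  split
  · rename_i hi1
    have hi : i < n := Nat.lt_of_succ_lt hi1
    rw [dif_pos hi]
    have hsub : Gam s ⟨i + 1, hi1⟩ ⊆ Gam s ⟨i, hi⟩ ∪ {(⟨i, hi⟩ : Fin n)} := by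
      rintro a ⟨ha, b, hb, hib⟩
      by_cases hai : a = ⟨i, hi⟩
      · exact Or.inr (by simp [hai])
      · refine Or.inl ⟨?_, b, hb, ?_⟩
        · have h1 : a.val < i + 1 := ha
          have h2 : a.val ≠ i := fun h => hai (Fin.ext h)
          exact show a.val < i by omega
        · have h3 : i + 1 ≤ b.val := hib
          exact show i ≤ b.val by omega
    calc (Gam s ⟨i + 1, hi1⟩).ncard ≤ (Gam s ⟨i, hi⟩ ∪ {(⟨i, hi⟩ : Fin n)}).ncard :=
          Set.ncard_le_ncard hsub (Set.toFinite _)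
      _ ≤ (Gam s ⟨i, hi⟩).ncard + ({(⟨i, hi⟩ : Fin n)} : Set (Fin n)).ncard :=
          Set.ncard_union_le _ _
      _ ≤ (Gam s ⟨i, hi⟩).ncard + 1 := by rw [Set.ncard_singleton]
  · exact Nat.zero_le _

lemma Ht_last {n : ℕ} (s : Setoid (Fin n)) (hi : n - 1 < n) :
    (Gam s ⟨n - 1, hi⟩).ncard ≤ 1 := by
  have hsub : Gam s ⟨n - 1, hi⟩ ⊆ {a : Fin n | precedes s a ⟨n - 1, hi⟩} := by
    rintro a ⟨ha, b, hb, hib⟩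
    have hbv : b.val = n - 1 := by
      have h1 : n - 1 ≤ b.val := Fin.le_def.1 hib
      have h2 : b.val < n := b.isLt
      omega
    have : b = ⟨n - 1, hi⟩ := Fin.ext hbv
    simpa [this] using hb
  exact le_trans (Set.ncard_le_ncard hsub (Set.toFinite _)) (pred_subsingleton s _)

lemma Ht_step_down {n : ℕ} (s : Setoid (Fin n)) (i : ℕ) : Ht s i ≤ Ht s (i + 1) + 1 := by
  unfold Ht
  split
  · rename_i hi
    by_cases hi1 : i + 1 < n
    · rw [dif_pos hi1]
      have hsub : Gam s ⟨i, hi⟩ ⊆ Gam s ⟨i + 1, hi1⟩ ∪ {a : Fin n | precedes s a ⟨i, hi⟩} := by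
        rintro a ⟨ha, b, hb, hib⟩
        by_cases hbi : b = ⟨i, hi⟩
        · exact Or.inr (by rw [← hbi]; exact hb)
        · refine Or.inl ⟨?_, b, hb, ?_⟩
          · have h0 : a.val < i := ha
            exact show a.val < i + 1 by omega
          · have h1 : i ≤ b.val := hib
            have h2 : b.val ≠ i := fun h => hbi (Fin.ext h)
            exact show i + 1 ≤ b.val by omega
      calc (Gam s ⟨i, hi⟩).ncard
          ≤ (Gam s ⟨i + 1, hi1⟩ ∪ {a : Fin n | precedes s a ⟨i, hi⟩}).ncard :=
            Set.ncard_le_ncard hsub (Set.toFinite _)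
        _ ≤ (Gam s ⟨i + 1, hi1⟩).ncard + ({a : Fin n | precedes s a ⟨i, hi⟩}).ncard :=
            Set.ncard_union_le _ _
        _ ≤ (Gam s ⟨i + 1, hi1⟩).ncard + 1 :=
            Nat.add_le_add_left (pred_subsingleton s _) _
    · rw [dif_neg hi1]
      have hieq : i = n - 1 := by omega
      subst hieq
      exact le_trans (Ht_last s hi) (by omega)
  · exact Nat.zero_le _

/-- Discrete IVT, ascending. -/
lemma ivt_up (f : ℕ → ℕ) (hf : ∀ i, f (i + 1) ≤ f i + 1) {a b k : ℕ} (hab : a ≤ b)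
    (h1 : f a ≤ k) (h2 : k ≤ f b) : ∃ j, a ≤ j ∧ j ≤ b ∧ f j = k := by
  induction b, hab using Nat.le_induction with
  | base => exact ⟨a, le_rfl, le_rfl, le_antisymm h1 h2⟩
  | succ b hab ih =>
    by_cases hkb : k ≤ f b
    · obtain ⟨j, hj1, hj2, hj3⟩ := ih hkb
      exact ⟨j, hj1, Nat.le_succ_of_le hj2, hj3⟩
    · have := hf b
      exact ⟨b + 1, by omega, le_rfl, by omega⟩

/-- Discrete IVT, descending. -/
lemma ivt_down (f : ℕ → ℕ) (hf : ∀ i, f i ≤ f (i + 1) + 1) {a b k : ℕ} (hab : a ≤ b)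
    (h1 : k ≤ f a) (h2 : f b ≤ k) : ∃ j, a ≤ j ∧ j ≤ b ∧ f j = k := by
  induction b, hab using Nat.le_induction with
  | base => exact ⟨a, le_rfl, le_rfl, le_antisymm h2 h1⟩
  | succ b hab ih =>
    by_cases hkb : f b ≤ k
    · obtain ⟨j, hj1, hj2, hj3⟩ := ih hkb
      exact ⟨j, hj1, Nat.le_succ_of_le hj2, hj3⟩
    · have := hf b
      exact ⟨b + 1, by omega, le_rfl, by omega⟩

/-- For any set partition `π` of `{1,…,n}` (`n ≥ 1`), with `ℓ k = #{i : #Γ_i(π) = k}`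
and `p = max{k : ℓ k > 0}`, the sequence `(ℓ 0, …, ℓ p)` is a composition of `n`
(all entries positive, summing to `n`) with `ℓ k ≥ 2` for `1 ≤ k < p`
(a Fibonacci composition). -/
theorem ell_is_fibonacci_composition {n : ℕ} (hn : 1 ≤ n) (s : Setoid (Fin n))
    (ℓ : ℕ → ℕ) (hℓ : ∀ k, ℓ k = Set.ncard {i : Fin n | (Gam s i).ncard = k})
    (p : ℕ) (hp1 : 0 < ℓ p) (hp2 : ∀ k, 0 < ℓ k → k ≤ p) :
    (∀ k ≤ p, 0 < ℓ k) ∧ (∑ k ∈ Finset.range (p + 1), ℓ k = n) ∧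
      (∀ k, 1 ≤ k → k < p → 2 ≤ ℓ k) := by
  classical
  -- an element achieving height p
  have hne : {i : Fin n | (Gam s i).ncard = p}.Nonempty := by
    rw [← Set.ncard_pos (Set.toFinite _), ← hℓ p]; exact hp1
  obtain ⟨mf, hmf⟩ := hne
  have hHt : ∀ (i : Fin n), Ht s i.val = (Gam s i).ncard := fun i => by
    simp [Ht, i.isLt]
  have hmfH : Ht s mf.val = p := by rw [hHt]; exact hmf
  -- every value of Gam-card is ≤ p
  have hval : ∀ i : Fin n, (Gam s i).ncard ≤ p := by
    intro i
    apply hp2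
    rw [hℓ, Set.ncard_pos (Set.toFinite _)]
    exact ⟨i, rfl⟩
  have mem_of_Ht : ∀ (j : ℕ) (hj : j < n) (k : ℕ), Ht s j = k →
      (⟨j, hj⟩ : Fin n) ∈ {i : Fin n | (Gam s i).ncard = k} := by
    intro j hj k hk
    rw [Set.mem_setOf_eq, ← hHt ⟨j, hj⟩]
    exact hk
  refine ⟨?_, ?_, ?_⟩
  · -- positivity
    intro k hk
    obtain ⟨j, hj1, hj2, hj3⟩ := ivt_up (Ht s) (Ht_step_up s) (k := k) (Nat.zero_le mf.val)
      (by simp [Ht_zero]) (by rw [hmfH]; exact hk)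
    have hjn : j < n := lt_of_le_of_lt hj2 mf.isLt
    rw [hℓ, Set.ncard_pos (Set.toFinite _)]
    exact ⟨⟨j, hjn⟩, mem_of_Ht j hjn k hj3⟩
  · -- sum
    have key : (Finset.univ : Finset (Fin n)).card =
        ∑ k ∈ Finset.range (p + 1),
          ((Finset.univ : Finset (Fin n)).filter (fun i => (Gam s i).ncard = k)).card := by
      apply Finset.card_eq_sum_card_fiberwise
      intro i _
      rw [Finset.mem_coe, Finset.mem_range]
      exact Nat.lt_succ_of_le (hval i)
    rw [Finset.card_univ, Fintype.card_fin] at key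
    rw [key]
    apply Finset.sum_congr rfl
    intro k _
    rw [hℓ, Set.ncard_eq_toFinset_card']
    congr 1
    ext i
    simp
  · -- ℓ k ≥ 2 for 1 ≤ k < p
    intro k hk1 hkp
    obtain ⟨j1, hj11, hj12, hj13⟩ := ivt_up (Ht s) (Ht_step_up s) (k := k) (Nat.zero_le mf.val)
      (by simp [Ht_zero]) (by rw [hmfH]; omega)
    obtain ⟨j2, hj21, hj22, hj23⟩ := ivt_down (Ht s) (Ht_step_down s) (k := k)
      (le_of_lt mf.isLt) (by rw [hmfH]; omega)
      (by show Ht s n ≤ k; unfold Ht; simp)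
    have hj1m : j1 < mf.val := lt_of_le_of_ne hj12 (fun h => by
      rw [h, hmfH] at hj13; omega)
    have hj2m : mf.val < j2 := lt_of_le_of_ne hj21 (fun h => by
      rw [← h, hmfH] at hj23; omega)
    have hj2n : j2 < n := lt_of_le_of_ne hj22 (fun h => by
      rw [h] at hj23; unfold Ht at hj23; rw [dif_neg (lt_irrefl n)] at hj23; omega)
    have hj1n : j1 < n := lt_trans hj1m mf.isLt
    rw [hℓ]
    have : 1 < {i : Fin n | (Gam s i).ncard = k}.ncard := by
      rw [Set.one_lt_ncard (Set.toFinite _)]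
      refine ⟨⟨j1, hj1n⟩, mem_of_Ht j1 hj1n k hj13,
        ⟨j2, hj2n⟩, mem_of_Ht j2 hj2n k hj23, ?_⟩
      intro h
      have : j1 = j2 := Fin.mk.inj_iff.1 h
      omega
    omega
end

section
/- Fix ρ ∈ ℝ. Set x_k = k + ρ − 1 and y_k = kρ for k ≥ 1. Define the (normalized) Motzkin moments a_n as the weighted sum over Motzkin paths of length n, where each horizontal step at height k has weight x_{k+1} and each up-step from height k−1 to height k (paired with its matching down-step) has weight y_k. Then a_n = Σ_{π ∈ Π(n)} ρ^{#blocks(π)}, the sum over all set partitions of {1,...,n} weighted by ρ to the number of blocks (the Bell/Touchard polynomial). -/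
/-!
Both sides are the case `k = 0` of a family indexed by a height `k`. On the path side, take the
weighted sum over Motzkin prefixes of length `n` ending at height `k`; on the partition side,
take the partitions of `Fin n` with `k` marked blocks, each unmarked block weighted by `ρ`, that
is `∑ₛ C(b, k) ρ^(b - k)` with `b` the number of blocks of `s`. Both families are `[k = 0]` at
`n = 0` and satisfy the transfer recurrence
`a (n+1) k = (k + ρ) a n k + (k + 1) ρ a n (k+1) + a n (k-1)`:
for paths by splitting off the last step, for partitions by adding the new element either as a
singleton block or to one of the `b` old blocks, and using `C(b+1, k) = C(b, k) + C(b, k-1)` and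
`(k + 1) C(b, k+1) = (b - k) C(b, k)`.
-/

/-- A Motzkin path of length `n` encoded by its height function `h : ℕ → ℕ`:
`h 0 = 0`, `h n = 0` (and `h i = 0` for `i ≥ n`), with steps `±1` or `0`. -/
def IsMotzkinHt (n : ℕ) (h : ℕ → ℕ) : Prop :=
  h 0 = 0 ∧ h n = 0 ∧ (∀ i, n ≤ i → h i = 0) ∧
  ∀ i < n, h (i + 1) ≤ h i + 1 ∧ h i ≤ h (i + 1) + 1

/-- Charlier weight of a Motzkin path: a horizontal step at height `k` carries
weight `x_{k+1} = k + ρ`; a down-step from height `k` carries the weight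
`y_k = k⬝ρ` of its matching up-step; up-steps carry weight `1`. -/
noncomputable def motzWeight (ρ : ℝ) (n : ℕ) (h : ℕ → ℕ) : ℝ :=
  ∏ i ∈ Finset.range n,
    (if h (i + 1) = h i then (h i : ℝ) + ρ
     else if h (i + 1) + 1 = h i then (h i : ℝ) * ρ
     else 1)

def motzkinPrefixes (n k : ℕ) : Set (ℕ → ℕ) :=
  {h | h 0 = 0 ∧ (∀ i, n ≤ i → h i = k) ∧
    ∀ i < n, h (i + 1) ≤ h i + 1 ∧ h i ≤ h (i + 1) + 1}

def extendConst (n k : ℕ) (h : ℕ → ℕ) : ℕ → ℕ := fun i => if i ≤ n then h i else k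

theorem motzkinPrefixes_zero (k : ℕ) :
    motzkinPrefixes 0 k = if k = 0 then {fun _ => 0} else ∅ := by
  ext h
  split_ifs with hk
  · subst hk
    refine ⟨fun hh => funext fun i => hh.2.1 i i.zero_le, ?_⟩
    rintro rfl
    exact ⟨rfl, fun _ _ => rfl, fun i hi => absurd hi i.not_lt_zero⟩
  · simp only [Set.mem_empty_iff_false, iff_false]
    exact fun hh => hk (hh.2.1 0 le_rfl ▸ hh.1)

theorem apply_eq_of_mem_motzkinPrefixes {n k : ℕ} {h : ℕ → ℕ} (hh : h ∈ motzkinPrefixes n k) : h n = k :=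
  hh.2.1 n le_rfl

theorem extendConst_mem_motzkinPrefixes {n k k' : ℕ} {h : ℕ → ℕ} (hh : h ∈ motzkinPrefixes n k')
    (hk' : k' ∈ Set.Icc (k - 1) (k + 1)) : extendConst n k h ∈ motzkinPrefixes (n + 1) k := by
  obtain ⟨h0, hend, hstep⟩ := hh
  refine ⟨by simp [extendConst, h0], fun i hi => if_neg (by omega), fun i hi => ?_⟩
  rcases Nat.lt_or_ge i n with hin | hin
  · simp only [extendConst, if_pos hin.le, if_pos (Nat.succ_le_of_lt hin)]
    exact hstep i hin
  · obtain rfl : i = n := by omega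
    have := hend i le_rfl
    simp only [extendConst, le_rfl, if_true, show ¬i + 1 ≤ i by omega, if_false]
    simp only [Set.mem_Icc] at hk'
    omega

theorem injOn_extendConst (n k k' : ℕ) : (motzkinPrefixes n k').InjOn (extendConst n k) := by
  intro h₁ hh₁ h₂ hh₂ heq
  funext i
  rcases le_or_gt i n with hi | hi
  · simpa [extendConst, hi] using congrFun heq i
  · rw [hh₁.2.1 i hi.le, hh₂.2.1 i hi.le]

theorem extendConst_truncate {n k : ℕ} {h : ℕ → ℕ} (hh : h ∈ motzkinPrefixes (n + 1) k) :
    extendConst n k (extendConst n (h n) h) = h := by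
  funext i
  by_cases hi : i ≤ n
  · simp [extendConst, hi]
  · simp [extendConst, hi, hh.2.1 i (by omega)]

theorem motzkinPrefixes_succ (n k : ℕ) :
    motzkinPrefixes (n + 1) k =
      ⋃ k' ∈ Set.Icc (k - 1) (k + 1), extendConst n k '' motzkinPrefixes n k' := by
  ext h
  simp only [Set.mem_iUnion, Set.mem_image]
  constructor
  · intro hh
    have ⟨h0, hend, hstep⟩ := hh
    refine ⟨h n, ?_, extendConst n (h n) h, ⟨by simp [extendConst, h0], fun i hi => ?_,
      fun i hi => ?_⟩, extendConst_truncate hh⟩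
    · have hlast := hstep n n.lt_succ_self
      have hk := hend (n + 1) le_rfl
      simp only [Set.mem_Icc]
      omega
    · rcases hi.eq_or_lt with rfl | hi
      exacts [if_pos le_rfl, if_neg hi.not_ge]
    · simpa [extendConst, hi.le, Nat.succ_le_of_lt hi] using hstep i (by omega)
  · rintro ⟨k', hk', h', hh', rfl⟩
    exact extendConst_mem_motzkinPrefixes hh' hk'

theorem pairwiseDisjoint_image_extendConst (n k : ℕ) (I : Set ℕ) :
    I.PairwiseDisjoint fun k' => extendConst n k '' motzkinPrefixes n k' := by
  rintro a - b - hab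
  refine Set.disjoint_left.mpr ?_
  rintro _ ⟨h₁, hh₁, rfl⟩ ⟨h₂, hh₂, heq⟩
  apply hab
  have := congrFun heq n
  simp only [extendConst, le_rfl, if_true] at this
  rw [← apply_eq_of_mem_motzkinPrefixes hh₁, ← apply_eq_of_mem_motzkinPrefixes hh₂, this]

theorem motzkinPrefixes_finite (n k : ℕ) : (motzkinPrefixes n k).Finite := by
  induction n generalizing k with
  | zero =>
    rw [motzkinPrefixes_zero]
    split_ifs
    exacts [Set.finite_singleton _, Set.finite_empty]
  | succ n ih =>
    rw [motzkinPrefixes_succ]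
    exact (Set.finite_Icc _ _).biUnion fun k' _ => (ih k').image _

section PathSums

variable {R : Type*} [CommSemiring R] (w : ℕ → ℕ → R)

def pathWeight (n : ℕ) (h : ℕ → ℕ) : R :=
  ∏ i ∈ Finset.range n, w (h i) (h (i + 1))

noncomputable def pathSum (n k : ℕ) : R :=
  ∑ᶠ h ∈ motzkinPrefixes n k, pathWeight w n h

theorem pathWeight_extendConst (n k : ℕ) (h : ℕ → ℕ) :
    pathWeight w (n + 1) (extendConst n k h) = pathWeight w n h * w (h n) k := by
  rw [pathWeight, Finset.prod_range_succ, pathWeight]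
  congr 1
  · refine Finset.prod_congr rfl fun i hi => ?_
    have hi : i < n := Finset.mem_range.mp hi
    simp [extendConst, hi.le, Nat.succ_le_of_lt hi]
  · simp [extendConst]

theorem pathSum_zero (k : ℕ) : pathSum w 0 k = if k = 0 then 1 else 0 := by
  rw [pathSum, motzkinPrefixes_zero]
  split_ifs
  · simp [pathWeight]
  · simp

theorem pathSum_succ (n k : ℕ) :
    pathSum w (n + 1) k = ∑ k' ∈ Finset.Icc (k - 1) (k + 1), pathSum w n k' * w k' k := by
  rw [pathSum, motzkinPrefixes_succ,
    finsum_mem_biUnion (pairwiseDisjoint_image_extendConst n k _)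
      (Set.finite_Icc _ _) fun k' _ => (motzkinPrefixes_finite n k').image _,
    ← Finset.coe_Icc, finsum_mem_coe_finset]
  refine Finset.sum_congr rfl fun k' _ => ?_
  rw [finsum_mem_image (injOn_extendConst n k k'), pathSum,
    finsum_mem_mul' _ _ (motzkinPrefixes_finite n k')]
  refine finsum_mem_congr rfl fun h hh => ?_
  rw [pathWeight_extendConst, apply_eq_of_mem_motzkinPrefixes hh]

end PathSums

namespace Setoid

variable {α β : Type*}

instance finite [Finite α] : Finite (Setoid α) :=
  Finite.of_injective (fun s : Setoid α => ⇑s) fun _ _ => eq_iff_rel_eq.mpr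

noncomputable instance fintypeOfFinite [Finite α] : Fintype (Setoid α) := Fintype.ofFinite _

def _root_.Equiv.setoidCongr (e : α ≃ β) : Setoid α ≃ Setoid β where
  toFun s := s.comap e.symm
  invFun t := t.comap e
  left_inv s := by ext; simp [comap_rel]
  right_inv t := by ext; simp [comap_rel]

theorem _root_.Equiv.setoidCongr_apply (e : α ≃ β) (s : Setoid α) (x y : β) :
    e.setoidCongr s x y ↔ s (e.symm x) (e.symm y) :=
  Iff.rfl

theorem sum_card_quotient_congr {M : Type*} [AddCommMonoid M] [Finite α] [Finite β]
    (e : α ≃ β) (f : ℕ → M) :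
    ∑ s : Setoid α, f (Nat.card (Quotient s)) = ∑ t : Setoid β, f (Nat.card (Quotient t)) :=
  Fintype.sum_equiv e.setoidCongr _ _ fun s =>
    congrArg f (Nat.card_congr (Quotient.congr e fun a b => by
      rw [e.setoidCongr_apply, e.symm_apply_apply, e.symm_apply_apply]))

theorem ext_option {r r' : Setoid (Option α)} (hsome : r.comap some = r'.comap some)
    (hnone : ∀ a, r (some a) none ↔ r' (some a) none) : r = r' := by
  have hsome' : ∀ a b, r (some a) (some b) ↔ r' (some a) (some b) := fun a b => by
    rw [← comap_rel, hsome, comap_rel]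
  ext x y
  rcases x with _ | a <;> rcases y with _ | b
  · exact iff_of_true (r.refl' _) (r'.refl' _)
  · rw [r.comm', r'.comm']; exact hnone b
  · exact hnone a
  · exact hsome' a b

/-- The new point `none` forms a singleton block (`o = none`) or joins the block `q`
(`o = some q`). -/
def extendOption (s : Setoid α) (o : Option (Quotient s)) : Setoid (Option α) :=
  ker fun x => x.elim o fun a => some ⟦a⟧

theorem extendOption_apply (s : Setoid α) (o : Option (Quotient s)) (x y : Option α) :
    s.extendOption o x y ↔ (x.elim o fun a => some ⟦a⟧) = y.elim o fun a => some ⟦a⟧ :=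
  Iff.rfl

theorem comap_some_extendOption (s : Setoid α) (o : Option (Quotient s)) :
    (s.extendOption o).comap some = s := by
  ext a b
  simp [comap_rel, extendOption_apply, Quotient.eq]

theorem extendOption_some_none (s : Setoid α) (o : Option (Quotient s)) (a : α) :
    s.extendOption o (some a) none ↔ o = some ⟦a⟧ := by
  simp [extendOption_apply, eq_comm]

theorem extendOption_injective :
    Function.Injective fun p : Σ s : Setoid α, Option (Quotient s) => p.1.extendOption p.2 := by
  rintro ⟨s, o⟩ ⟨s', o'⟩ h
  dsimp only at h
  obtain rfl : s = s' := by
    rw [← comap_some_extendOption s o, ← comap_some_extendOption s' o']; exact congrArg _ h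
  have hblock : ∀ a : α, o = some ⟦a⟧ ↔ o' = some ⟦a⟧ := fun a => by
    rw [← extendOption_some_none, ← extendOption_some_none, h]
  suffices o = o' by rw [this]
  rcases o with _ | ⟨⟨a⟩⟩ <;> rcases o' with _ | ⟨⟨b⟩⟩
  · rfl
  · exact absurd ((hblock b).mpr rfl) (by simp)
  · exact ((hblock a).mp rfl).symm
  · exact ((hblock a).mp rfl).symm

theorem extendOption_surjective (t : Setoid (Option α)) :
    ∃ p : Σ s : Setoid α, Option (Quotient s), p.1.extendOption p.2 = t := by
  classical
  refine ⟨⟨t.comap some, if h : ∃ a, t (some a) none then some ⟦h.choose⟧ else none⟩,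
    ext_option (comap_some_extendOption _ _) fun a => ?_⟩
  rw [extendOption_some_none]
  dsimp only
  split_ifs with h
  · rw [Option.some_inj, Quotient.eq, comap_rel]
    exact ⟨fun hc => t.trans' (t.symm' hc) h.choose_spec,
      fun ha => t.trans' h.choose_spec (t.symm' ha)⟩
  · simpa using fun ha => h ⟨a, ha⟩

theorem card_quotient_extendOption_none [Finite α] (s : Setoid α) :
    Nat.card (Quotient (s.extendOption none)) = Nat.card (Quotient s) + 1 := by
  rw [extendOption, Nat.card_congr (quotientKerEquivOfSurjective _ ?_), Finite.card_option]
  rintro (_ | ⟨⟨a⟩⟩)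
  exacts [⟨none, rfl⟩, ⟨some a, rfl⟩]

theorem card_quotient_extendOption_some (s : Setoid α) (q : Quotient s) :
    Nat.card (Quotient (s.extendOption (some q))) = Nat.card (Quotient s) := by
  have hrange : Set.range (fun x : Option α => x.elim (some q) fun a => some ⟦a⟧) =
      Set.range some := by
    ext x
    constructor
    · rintro ⟨_ | a, rfl⟩
      exacts [⟨q, rfl⟩, ⟨⟦a⟧, rfl⟩]
    · rintro ⟨⟨a⟩, rfl⟩
      exact ⟨some a, rfl⟩
  rw [extendOption, Nat.card_congr (quotientKerEquivRange _), hrange,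
    Nat.card_range_of_injective (Option.some_injective _)]

theorem sum_option_card_quotient {M : Type*} [AddCommMonoid M] [Finite α] (f : ℕ → M) :
    ∑ t : Setoid (Option α), f (Nat.card (Quotient t)) =
      ∑ s : Setoid α, (f (Nat.card (Quotient s) + 1) +
        Nat.card (Quotient s) • f (Nat.card (Quotient s))) := by
  classical
  have := Fintype.ofFinite α
  rw [← Fintype.sum_bijective _ ⟨extendOption_injective, extendOption_surjective⟩
    (fun p => f (Nat.card (Quotient (p.1.extendOption p.2)))) _ fun _ => rfl,
    ← Finset.univ_sigma_univ, Finset.sum_sigma]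
  refine Finset.sum_congr rfl fun s _ => ?_
  simp only [Fintype.sum_option, card_quotient_extendOption_none, card_quotient_extendOption_some,
    Finset.sum_const, Finset.card_univ, ← Nat.card_eq_fintype_card]

end Setoid

section Charlier

variable (ρ : ℝ)

def charlierStep (a b : ℕ) : ℝ :=
  if b = a then a + ρ else if b + 1 = a then a * ρ else 1

theorem charlierStep_self (a : ℕ) : charlierStep ρ a a = a + ρ :=
  if_pos rfl

theorem charlierStep_succ_self (a : ℕ) : charlierStep ρ (a + 1) a = (a + 1) * ρ := by
  simp [charlierStep]

theorem charlierStep_self_succ (a : ℕ) : charlierStep ρ a (a + 1) = 1 := by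
  rw [charlierStep, if_neg (by omega), if_neg (by omega)]

def markedBlockWeight (k b : ℕ) : ℝ := b.choose k * ρ ^ (b - k)

theorem markedBlockWeight_zero_succ (b : ℕ) :
    markedBlockWeight ρ 0 (b + 1) = ρ * markedBlockWeight ρ 0 b := by
  simp [markedBlockWeight, pow_succ, mul_comm]

theorem markedBlockWeight_succ_succ (k b : ℕ) :
    markedBlockWeight ρ (k + 1) (b + 1) =
      ρ * markedBlockWeight ρ (k + 1) b + markedBlockWeight ρ k b := by
  rcases le_or_gt k b with hkb | hbk
  · obtain ⟨m, rfl⟩ := Nat.exists_eq_add_of_le hkb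
    rcases m with _ | m
    · simp [markedBlockWeight, Nat.choose_succ_self]
    · simp only [markedBlockWeight, Nat.choose_succ_succ', Nat.cast_add]
      rw [show k + (m + 1) + 1 - (k + 1) = m + 1 by omega,
        show k + (m + 1) - (k + 1) = m by omega, show k + (m + 1) - k = m + 1 by omega, pow_succ]
      ring
  · simp [markedBlockWeight, Nat.choose_eq_zero_of_lt, hbk, Nat.lt_succ_of_lt hbk]

theorem cast_mul_markedBlockWeight (k b : ℕ) :
    b * markedBlockWeight ρ k b =
      k * markedBlockWeight ρ k b + (k + 1) * ρ * markedBlockWeight ρ (k + 1) b := by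
  rcases lt_or_ge k b with hkb | hbk
  · have hchoose : ((b.choose (k + 1) : ℕ) : ℝ) * (k + 1) = b.choose k * (b - k) := by
      rw [← Nat.cast_sub hkb.le]; exact_mod_cast Nat.choose_succ_right_eq b k
    rw [markedBlockWeight, markedBlockWeight, show b - k = b - (k + 1) + 1 by omega, pow_succ]
    linear_combination (-(ρ ^ (b - (k + 1)) * ρ)) * hchoose
  · rcases hbk.eq_or_lt with rfl | hbk
    · simp [markedBlockWeight]
    · simp [markedBlockWeight, Nat.choose_eq_zero_of_lt, hbk, Nat.lt_succ_of_lt hbk]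

theorem markedBlockWeight_succ_add (k b : ℕ) :
    markedBlockWeight ρ k (b + 1) + b * markedBlockWeight ρ k b =
      ∑ k' ∈ Finset.Icc (k - 1) (k + 1), markedBlockWeight ρ k' b * charlierStep ρ k' k := by
  rcases k with _ | k
  · rw [show Finset.Icc (0 - 1) (0 + 1) = {0, 0 + 1} by decide, Finset.sum_pair (by omega),
      markedBlockWeight_zero_succ, cast_mul_markedBlockWeight, charlierStep_self,
      charlierStep_succ_self]
    push_cast
    ring
  · rw [show Finset.Icc (k + 1 - 1) (k + 1 + 1) = {k, k + 1, k + 1 + 1} by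
        ext
        simp only [Finset.mem_Icc, Finset.mem_insert, Finset.mem_singleton]
        omega,
      Finset.sum_insert (by simp only [Finset.mem_insert, Finset.mem_singleton]; omega),
      Finset.sum_pair (by omega), markedBlockWeight_succ_succ,
      cast_mul_markedBlockWeight, charlierStep_self_succ, charlierStep_self, charlierStep_succ_self]
    push_cast
    ring

noncomputable def markedPartitionSum (n k : ℕ) : ℝ :=
  ∑ s : Setoid (Fin n), markedBlockWeight ρ k (Nat.card (Quotient s))

theorem markedPartitionSum_zero (k : ℕ) :
    markedPartitionSum ρ 0 k = if k = 0 then 1 else 0 := by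
  have : Subsingleton (Setoid (Fin 0)) := ⟨fun _ _ => Setoid.ext fun x => x.elim0⟩
  rw [markedPartitionSum, Fintype.sum_subsingleton _ ⊥, Nat.card_of_isEmpty]
  rcases k with _ | k <;> simp [markedBlockWeight]

theorem markedPartitionSum_succ (n k : ℕ) :
    markedPartitionSum ρ (n + 1) k =
      ∑ k' ∈ Finset.Icc (k - 1) (k + 1), markedPartitionSum ρ n k' * charlierStep ρ k' k := by
  simp only [markedPartitionSum, Setoid.sum_card_quotient_congr (finSuccEquivLast (n := n)),
    Setoid.sum_option_card_quotient, nsmul_eq_mul, markedBlockWeight_succ_add, Finset.sum_mul]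
  exact Finset.sum_comm

theorem pathSum_charlierStep (n k : ℕ) :
    pathSum (charlierStep ρ) n k = markedPartitionSum ρ n k := by
  induction n generalizing k with
  | zero => rw [pathSum_zero, markedPartitionSum_zero]
  | succ n ih => simp only [pathSum_succ, markedPartitionSum_succ, ih]

end Charlier

/-- Under the Charlier specialization `x_k = k + ρ − 1`, `y_k = kρ`, the `n`-th
normalized Motzkin moment equals the Bell/Touchard polynomial
`Σ_{π ∈ Π(n)} ρ^{#blocks(π)}`, where set partitions of `{1,…,n}` are encoded as
equivalence relations on `Fin n` and the number of blocks is the number of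
equivalence classes. -/
theorem charlier_moments_eq_bell (ρ : ℝ) (n : ℕ) :
    ∑ᶠ h ∈ {h : ℕ → ℕ | IsMotzkinHt n h}, motzWeight ρ n h =
      ∑ᶠ s : Setoid (Fin n), ρ ^ (Nat.card (Quotient s)) := by
  have hpaths : {h : ℕ → ℕ | IsMotzkinHt n h} = motzkinPrefixes n 0 := by
    ext h
    exact ⟨fun ⟨h0, _, hend, hstep⟩ => ⟨h0, hend, hstep⟩,
      fun ⟨h0, hend, hstep⟩ => ⟨h0, hend n le_rfl, hend, hstep⟩⟩
  calc ∑ᶠ h ∈ {h : ℕ → ℕ | IsMotzkinHt n h}, motzWeight ρ n h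
      = pathSum (charlierStep ρ) n 0 := by rw [hpaths]; rfl
    _ = markedPartitionSum ρ n 0 := pathSum_charlierStep ρ n 0
    _ = ∑ᶠ s : Setoid (Fin n), ρ ^ (Nat.card (Quotient s)) := by
      simp [finsum_eq_sum_of_fintype, markedPartitionSum, markedBlockWeight]
end

section
/- Let x_k = y_k = k + γ for all k ≥ 1. Define the shifted B-determinants by B_0(m) = y_{m+1}, B_1(m) = x_{m+3}·y_{m+1} − x_{m+1}·y_{m+2}, and B_ℓ(m) = x_{m+ℓ+2}·B_{ℓ-1}(m) − y_{m+ℓ+1}·B_{ℓ-2}(m) for ℓ ≥ 2. Then B_k(m) = m + 1 + γ for all k ≥ 0 and m ≥ 0. -/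
/-!
The recurrence `B (ℓ+2) = x (m+ℓ+4) * B (ℓ+1) - y (m+ℓ+3) * B ℓ` has coefficients differing by
exactly one, so the consecutive differences satisfy `Δ (ℓ+1) = y (m+ℓ+3) * Δ ℓ`. A direct check
gives `B 1 m = B 0 m`, hence every difference vanishes and `B k m = B 0 m = m + 1 + γ`.
-/

section ConstantRecurrence

variable {R : Type*} [CommRing R] {u a b : ℕ → R}

theorem succ_eq_of_recurrence (hab : ∀ n, a n = b n + 1)
    (hrec : ∀ n, u (n + 2) = a n * u (n + 1) - b n * u n) (h₁ : u 1 = u 0) (n : ℕ) :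
    u (n + 1) = u n := by
  induction n with
  | zero => exact h₁
  | succ n ih =>
    show u (n + 2) = u (n + 1)
    rw [hrec, hab, ih]
    ring

theorem eq_initial_of_recurrence (hab : ∀ n, a n = b n + 1)
    (hrec : ∀ n, u (n + 2) = a n * u (n + 1) - b n * u n) (h₁ : u 1 = u 0) (n : ℕ) :
    u n = u 0 := by
  induction n with
  | zero => rfl
  | succ n ih => rw [succ_eq_of_recurrence hab hrec h₁, ih]

end ConstantRecurrence

/-- For the shifted Plancherel specialization `x k = y k = k + γ`, the shifted
B-determinants (with `B 0 m = y (m+1)`, `B 1 m = x (m+3) * y (m+1) - x (m+1) * y (m+2)`,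
`B (ℓ+2) m = x (m+ℓ+4) * B (ℓ+1) m - y (m+ℓ+3) * B ℓ m`) satisfy
`B k m = m + 1 + γ` for all `k ≥ 0`, `m ≥ 0`. -/
theorem shifted_plancherel_B (γ : ℝ) (x y : ℕ → ℝ)
    (hx : ∀ k, x k = (k : ℝ) + γ) (hy : ∀ k, y k = (k : ℝ) + γ)
    (B : ℕ → ℕ → ℝ)
    (hB0 : ∀ m, B 0 m = y (m + 1))
    (hB1 : ∀ m, B 1 m = x (m + 3) * y (m + 1) - x (m + 1) * y (m + 2))
    (hBrec : ∀ ℓ m, B (ℓ + 2) m = x (m + ℓ + 4) * B (ℓ + 1) m - y (m + ℓ + 3) * B ℓ m)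
    (k m : ℕ) :
    B k m = (m : ℝ) + 1 + γ := by
  have hab : ∀ ℓ, x (m + ℓ + 4) = y (m + ℓ + 3) + 1 := fun ℓ => by
    rw [hx, hy]; push_cast; ring
  have h₁ : B 1 m = B 0 m := by
    rw [hB1, hB0, hx, hx, hy, hy]; push_cast; ring
  rw [eq_initial_of_recurrence (u := (B · m)) hab (fun ℓ => hBrec ℓ m) h₁, hB0, hy]
  push_cast
  ring
end
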